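/- Let μ be a Borel probability measure and g a positive measurable function such that g^{2/p} is μ-integrable for all p ∈ (1,2] and g² log g² is μ-integrable. Then (μ(g²) − μ(g^{2/p})^p)/(p−1) tends to Ent_μ(g²) = μ(g² log g²) − μ(g²) log μ(g²) as p tends to 1 from above. -/
import Mathlib


open MeasureTheory Filter Topology

private lemma beck_aux_deriv {t : ℝ} (ht : 0 < t) {q : ℝ} (hq : 0 < q) :
    HasDerivAt (fun p : ℝ => t ^ (2 / p)) (-(2 / q ^ 2) * (t ^ (2 / q) * Real.log t)) q := by
  have h0 : HasDerivAt (fun p : ℝ => p⁻¹) (-(q ^ 2)⁻¹) q := hasDerivAt_inv hq.ne'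
  have h1 : HasDerivAt (fun p : ℝ => (2 / p) * Real.log t)
      ((2 * -(q ^ 2)⁻¹) * Real.log t) q := by
    simpa [div_eq_mul_inv] using ((h0.const_mul 2).mul_const (Real.log t))
  have h2 := h1.exp
  have heq : (fun p : ℝ => t ^ (2 / p)) = fun p => Real.exp ((2 / p) * Real.log t) := by
    funext p; rw [Real.rpow_def_of_pos ht, mul_comm]
  rw [heq]
  convert h2 using 1
  rw [Real.rpow_def_of_pos ht, mul_comm]
  ring

private lemma beck_aux_bound {t : ℝ} (ht : 0 < t) {q : ℝ} (hq : q ∈ Set.Icc (1 : ℝ) (3 / 2)) :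
    |(-(2 / q ^ 2) * (t ^ (2 / q) * Real.log t))| ≤
      t ^ (2 : ℝ) * |Real.log (t ^ (2 : ℝ))| + 6 * t := by
  have hq1 : (1 : ℝ) ≤ q := hq.1
  have hq2 : q ≤ 3 / 2 := hq.2
  have hq0 : 0 < q := lt_of_lt_of_le one_pos hq1
  have hc : |(-(2 / q ^ 2))| ≤ 2 := by
    rw [abs_neg, abs_of_nonneg (by positivity), div_le_iff₀ (by positivity)]
    nlinarith
  have htq : (0 : ℝ) ≤ t ^ (2 / q) := Real.rpow_nonneg ht.le _
  have habs : |(-(2 / q ^ 2) * (t ^ (2 / q) * Real.log t))| ≤ 2 * (t ^ (2 / q) * |Real.log t|) := by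
    rw [abs_mul, abs_mul, abs_of_nonneg htq]
    exact mul_le_mul_of_nonneg_right hc (by positivity)
  rcases le_or_gt 1 t with h1 | h1
  · have hlog : 0 ≤ Real.log t := Real.log_nonneg h1
    have hle : t ^ (2 / q) ≤ t ^ (2 : ℝ) :=
      Real.rpow_le_rpow_of_exponent_le h1 (by rw [div_le_iff₀ hq0]; linarith)
    have hkey : 2 * (t ^ (2 / q) * |Real.log t|) ≤ t ^ (2 : ℝ) * |Real.log (t ^ (2 : ℝ))| := by
      rw [abs_of_nonneg hlog, Real.log_rpow ht,
        abs_of_nonneg (by positivity)]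
      nlinarith
    nlinarith [mul_nonneg (by norm_num : (0:ℝ) ≤ 6) ht.le]
  · have hlog : Real.log t ≤ 0 := Real.log_nonpos ht.le h1.le
    have hle : t ^ (2 / q) ≤ t ^ ((4 : ℝ) / 3) :=
      Real.rpow_le_rpow_of_exponent_ge ht h1.le (by rw [le_div_iff₀ hq0]; linarith)
    have hpow : (0 : ℝ) < t ^ (-(1 : ℝ) / 3) := Real.rpow_pos_of_pos ht _
    have h3 : -Real.log t ≤ 3 * t ^ (-(1 : ℝ) / 3) := by
      have hl1 := Real.log_le_sub_one_of_pos hpow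
      have hl2 : Real.log (t ^ (-(1 : ℝ) / 3)) = (-(1 : ℝ) / 3) * Real.log t :=
        Real.log_rpow ht _
      nlinarith
    have hmul : t ^ ((4 : ℝ) / 3) * t ^ (-(1 : ℝ) / 3) = t := by
      rw [← Real.rpow_add ht]
      norm_num
    have hkey : 2 * (t ^ (2 / q) * |Real.log t|) ≤ 6 * t := by
      rw [abs_of_nonpos hlog]
      have h4 : t ^ (2 / q) * (-Real.log t) ≤ t ^ ((4 : ℝ) / 3) * (3 * t ^ (-(1 : ℝ) / 3)) := by
        have hnl : 0 ≤ -Real.log t := by linarith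
        have hpos : (0 : ℝ) ≤ t ^ ((4 : ℝ) / 3) := Real.rpow_nonneg ht.le _
        nlinarith
      nlinarith
    have hnn : (0 : ℝ) ≤ t ^ (2 : ℝ) * |Real.log (t ^ (2 : ℝ))| := by positivity
    linarith

private lemma beck_aux_slope_bound {t : ℝ} (ht : 0 < t) {p : ℝ}
    (hp : p ∈ Set.Ioo (1 : ℝ) (3 / 2)) :
    |t ^ (2 / p) - t ^ (2 : ℝ)| ≤
      (t ^ (2 : ℝ) * |Real.log (t ^ (2 : ℝ))| + 6 * t) * (p - 1) := by
  have h21 : (2 : ℝ) / 1 = 2 := by norm_num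
  have key := Convex.norm_image_sub_le_of_norm_hasDerivWithin_le
    (f := fun p : ℝ => t ^ (2 / p))
    (f' := fun q : ℝ => -(2 / q ^ 2) * (t ^ (2 / q) * Real.log t))
    (s := Set.Icc 1 p) (C := t ^ (2 : ℝ) * |Real.log (t ^ (2 : ℝ))| + 6 * t)
    (fun q hq => (beck_aux_deriv ht (lt_of_lt_of_le one_pos hq.1)).hasDerivWithinAt)
    (fun q hq => by
      rw [Real.norm_eq_abs]
      exact beck_aux_bound ht ⟨hq.1, hq.2.trans hp.2.le⟩)
    (convex_Icc 1 p) (Set.left_mem_Icc.2 hp.1.le) (Set.right_mem_Icc.2 hp.1.le)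
  have key2 : |t ^ (2 / p) - t ^ ((2:ℝ) / 1)| ≤
      (t ^ (2 : ℝ) * |Real.log (t ^ (2 : ℝ))| + 6 * t) * |p - 1| := key
  rw [h21, abs_of_pos (by linarith [hp.1] : (0:ℝ) < p - 1)] at key2
  exact key2

/-- Let `μ` be a Borel probability measure and `g` a positive measurable
function such that `g²` is `μ`-integrable, `g^{2/p}` is `μ`-integrable for all `p ∈ (1,2]`,
and `g² log g²` is `μ`-integrable.  Then `(μ(g²) − μ(g^{2/p})^p)/(p−1)` tends to
`Ent_μ(g²) = μ(g² log g²) − μ(g²) log μ(g²)` as `p → 1⁺`. -/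
theorem beckner_functional_tendsto_entropy
    {Ω : Type*} [MeasurableSpace Ω] (μ : Measure Ω) [IsProbabilityMeasure μ]
    (g : Ω → ℝ) (hg : Measurable g) (hgpos : ∀ x, 0 < g x)
    (hg2 : Integrable (fun x => g x ^ (2 : ℝ)) μ)
    (hint : ∀ p ∈ Set.Ioc (1 : ℝ) 2, Integrable (fun x => g x ^ (2 / p)) μ)
    (hent : Integrable (fun x => g x ^ (2 : ℝ) * Real.log (g x ^ (2 : ℝ))) μ) :
    Tendsto
      (fun p : ℝ =>
        ((∫ x, g x ^ (2 : ℝ) ∂μ) - (∫ x, g x ^ (2 / p) ∂μ) ^ p) / (p - 1))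
      (𝓝[>] (1 : ℝ))
      (𝓝 ((∫ x, g x ^ (2 : ℝ) * Real.log (g x ^ (2 : ℝ)) ∂μ) -
        (∫ x, g x ^ (2 : ℝ) ∂μ) * Real.log (∫ x, g x ^ (2 : ℝ) ∂μ))) := by
  set A := ∫ x, g x ^ (2 : ℝ) ∂μ with hA
  set E := ∫ x, g x ^ (2 : ℝ) * Real.log (g x ^ (2 : ℝ)) ∂μ with hE
  have h21 : (2 : ℝ) / 1 = 2 := by norm_num
  have hApos : 0 < A := by
    rw [hA, integral_pos_iff_support_of_nonneg
      (fun x => Real.rpow_nonneg (hgpos x).le _) hg2]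
    have hsupp : Function.support (fun x => g x ^ (2 : ℝ)) = Set.univ := by
      ext x
      simp only [Function.mem_support, Set.mem_univ, iff_true]
      exact (Real.rpow_pos_of_pos (hgpos x) 2).ne'
    rw [hsupp]
    simp
  -- dominating function
  set D : Ω → ℝ := fun x => g x ^ (2 : ℝ) * |Real.log (g x ^ (2 : ℝ))| + 6 * g x with hD
  have hDint : Integrable D μ := by
    apply Integrable.add
    · refine hent.abs.congr (Eventually.of_forall fun x => ?_)
      show |g x ^ (2:ℝ) * Real.log (g x ^ (2:ℝ))| = g x ^ (2:ℝ) * |Real.log (g x ^ (2:ℝ))|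
      rw [abs_mul, abs_of_nonneg (Real.rpow_nonneg (hgpos x).le _)]
    · have h2 := hint 2 ⟨one_lt_two, le_refl 2⟩
      have e : (2 : ℝ) / 2 = 1 := by norm_num
      rw [e] at h2
      simp only [Real.rpow_one] at h2
      exact h2.const_mul 6
  -- dominated convergence for the difference quotient
  have hmeas : ∀ p : ℝ, AEStronglyMeasurable (fun x => g x ^ (2 / p)) μ :=
    fun p => (hg.pow_const (2 / p)).aestronglyMeasurable
  have hIoo : Set.Ioo (1 : ℝ) (3 / 2) ∈ 𝓝[>] (1 : ℝ) :=
    Ioo_mem_nhdsGT_of_mem (by norm_num)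
  have key := tendsto_integral_filter_of_dominated_convergence (μ := μ)
    (l := 𝓝[>] (1 : ℝ))
    (F := fun p x => (g x ^ (2 / p) - g x ^ (2 : ℝ)) / (p - 1))
    (f := fun x => -(g x ^ (2 : ℝ) * Real.log (g x ^ (2 : ℝ)))) D
    (Eventually.of_forall fun p =>
      (((hg.pow_const (2 / p)).sub (hg.pow_const 2)).div_const (p - 1)).aestronglyMeasurable)
    (by
      filter_upwards [hIoo] with p hp
      refine Eventually.of_forall fun x => ?_
      rw [norm_div, Real.norm_eq_abs, Real.norm_eq_abs,
        abs_of_pos (by linarith [hp.1] : (0:ℝ) < p - 1),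
        div_le_iff₀ (by linarith [hp.1])]
      exact beck_aux_slope_bound (hgpos x) hp)
    hDint
    (Eventually.of_forall fun x => by
      have hd := beck_aux_deriv (hgpos x) one_pos
      rw [hasDerivAt_iff_tendsto_slope] at hd
      have hd2 := hd.mono_left
        (nhdsWithin_mono 1 (fun y hy => ne_of_gt hy))
      have heq : ∀ p : ℝ, slope (fun p : ℝ => g x ^ (2 / p)) 1 p
          = (g x ^ (2 / p) - g x ^ (2 : ℝ)) / (p - 1) := by
        intro p
        rw [slope_def_field, h21]
      have hval : -(2 / (1:ℝ) ^ 2) * (g x ^ ((2:ℝ) / 1) * Real.log (g x))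
          = -(g x ^ (2 : ℝ) * Real.log (g x ^ (2 : ℝ))) := by
        rw [h21, Real.log_rpow (hgpos x)]
        ring
      rw [hval] at hd2
      exact hd2.congr heq)
  rw [integral_neg, ← hE] at key
  -- identify the integrals of the quotients
  have hev : ∀ᶠ p in 𝓝[>] (1 : ℝ),
      (∫ x, (g x ^ (2 / p) - g x ^ (2 : ℝ)) / (p - 1) ∂μ)
        = ((∫ x, g x ^ (2 / p) ∂μ) - A) / (p - 1) := by
    filter_upwards [hIoo] with p hp
    rw [integral_div, integral_sub (hint p ⟨hp.1, by linarith [hp.2]⟩) hg2, ← hA]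
  have T1 : Tendsto (fun p => ((∫ x, g x ^ (2 / p) ∂μ) - A) / (p - 1))
      (𝓝[>] (1 : ℝ)) (𝓝 (-E)) := key.congr' hev
  -- one-sided derivative of Φ
  have hΦ1 : (∫ x, g x ^ ((2:ℝ) / 1) ∂μ) = A := by rw [h21, ← hA]
  have hΦ : HasDerivWithinAt (fun p : ℝ => ∫ x, g x ^ (2 / p) ∂μ) (-E) (Set.Ici 1) 1 := by
    rw [hasDerivWithinAt_iff_tendsto_slope, Set.Ici_sdiff_left]
    refine T1.congr fun p => ?_
    rw [slope_def_field, hΦ1]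
  -- derivative of ψ p = Φ(p)^p
  have hid : HasDerivWithinAt (fun p : ℝ => p) 1 (Set.Ici 1) 1 :=
    (hasDerivAt_id (1:ℝ)).hasDerivWithinAt
  have hψ := hΦ.rpow hid (by rw [hΦ1]; exact hApos)
  rw [hΦ1] at hψ
  simp only [Real.rpow_one, sub_self, Real.rpow_zero, mul_one, one_mul] at hψ
  -- hψ : HasDerivWithinAt (fun p => (∫ x, g x ^ (2/p) ∂μ) ^ p) (-E + A * Real.log A) (Ici 1) 1
  rw [hasDerivWithinAt_iff_tendsto_slope, Set.Ici_sdiff_left] at hψ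
  have hψ1 : (∫ x, g x ^ ((2:ℝ) / 1) ∂μ) ^ (1:ℝ) = A := by
    rw [hΦ1, Real.rpow_one]
  have hfinal := hψ.neg
  have hlim : -(-E + A * Real.log A) = E - A * Real.log A := by ring
  rw [hlim] at hfinal
  refine hfinal.congr fun p => ?_
  rw [slope_def_field, hψ1]
  ring
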